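/- arXiv:1801.09369 — 4 statements merged into one kernel-verified Lean document; each statement's English description precedes it below -/
import Mathlib

section
/- For every regular uncountable cardinal κ, the reaping number r(κ) is at least the bounding number b(κ). -/
open Cardinal Set

/-- `A` is a subset of `κ` (identified with `Iio κ.ord`) of full cardinality `κ`,
i.e. `A ∈ [κ]^κ`. -/
def IsBig (κ : Cardinal.{0}) (A : Set Ordinal) : Prop :=
  A ⊆ Set.Iio κ.ord ∧ #A = Cardinal.lift.{1} κ

/-- `f` represents a function in `κ^κ`. -/
def FunOn (κ : Cardinal.{0}) (f : Ordinal → Ordinal) : Prop :=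
  ∀ o < κ.ord, f o < κ.ord

/-- `f ≤* g` : the set of `α < κ` with `g α < f α` has cardinality `< κ`. -/
def LeStar (κ : Cardinal.{0}) (f g : Ordinal → Ordinal) : Prop :=
  #({α : Ordinal | α < κ.ord ∧ g α < f α} : Set Ordinal) < Cardinal.lift.{1} κ

/-- `F ⊆ κ^κ` is `*`-unbounded. -/
def UnboundedFam (κ : Cardinal.{0}) (F : Set (Ordinal → Ordinal)) : Prop :=
  (∀ f ∈ F, FunOn κ f) ∧ ¬ ∃ g, FunOn κ g ∧ ∀ f ∈ F, LeStar κ f g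

/-- `F ⊆ κ^κ` is `*`-dominating. -/
def DominatingFam (κ : Cardinal.{0}) (F : Set (Ordinal → Ordinal)) : Prop :=
  (∀ f ∈ F, FunOn κ f) ∧ ∀ g, FunOn κ g → ∃ f ∈ F, LeStar κ g f

/-- The bounding number `𝔟(κ)`. -/
noncomputable def boundingNum (κ : Cardinal.{0}) : Cardinal.{1} :=
  sInf { c | ∃ F : Set (Ordinal → Ordinal), UnboundedFam κ F ∧ #F = c }

/-- The dominating number `𝔡(κ)`. -/
noncomputable def dominatingNum (κ : Cardinal.{0}) : Cardinal.{1} :=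
  sInf { c | ∃ F : Set (Ordinal → Ordinal), DominatingFam κ F ∧ #F = c }

/-- `B` reaps the family `F ⊆ [κ]^κ`. -/
def Reaps (κ : Cardinal.{0}) (B : Set Ordinal) (F : Set (Set Ordinal)) : Prop :=
  B ⊆ Set.Iio κ.ord ∧ ∀ A ∈ F,
    #(A ∩ B : Set Ordinal) = Cardinal.lift.{1} κ ∧
    #(A ∩ (Set.Iio κ.ord \ B) : Set Ordinal) = Cardinal.lift.{1} κ

/-- `F ⊆ [κ]^κ` is an unreaped family. -/
def UnreapedFam (κ : Cardinal.{0}) (F : Set (Set Ordinal)) : Prop :=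
  (∀ A ∈ F, IsBig κ A) ∧ ¬ ∃ B, Reaps κ B F

/-- The reaping number `𝔯(κ)`. -/
noncomputable def reapingNum (κ : Cardinal.{0}) : Cardinal.{1} :=
  sInf { c | ∃ F : Set (Set Ordinal), UnreapedFam κ F ∧ #F = c }

/-- `A` and `B` are almost disjoint: `|A ∩ B| < κ`. -/
def AlmostDisjoint (κ : Cardinal.{0}) (A B : Set Ordinal) : Prop :=
  #(A ∩ B : Set Ordinal) < Cardinal.lift.{1} κ

/-- `𝒜 ⊆ [κ]^κ` is an almost disjoint family. -/
def ADFamily (κ : Cardinal.{0}) (𝒜 : Set (Set Ordinal)) : Prop :=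
  (∀ A ∈ 𝒜, IsBig κ A) ∧ ∀ A ∈ 𝒜, ∀ B ∈ 𝒜, A ≠ B → AlmostDisjoint κ A B

/-- `𝒜 ⊆ [κ]^κ` is a maximal almost disjoint family. -/
def MADFamily (κ : Cardinal.{0}) (𝒜 : Set (Set Ordinal)) : Prop :=
  ADFamily κ 𝒜 ∧ Cardinal.lift.{1} κ ≤ #𝒜 ∧
    ∀ B, IsBig κ B → ∃ A ∈ 𝒜, ¬ AlmostDisjoint κ A B

/-- The almost disjointness number `𝔞(κ)`. -/
noncomputable def adNum (κ : Cardinal.{0}) : Cardinal.{1} :=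
  sInf { c | ∃ 𝒜 : Set (Set Ordinal), MADFamily κ 𝒜 ∧ #𝒜 = c }

/-- `E` is a club (closed unbounded set) in the ordinal `o`. -/
def IsClubIn (E : Set Ordinal) (o : Ordinal) : Prop :=
  E ⊆ Set.Iio o ∧ (∀ x < o, ∃ e ∈ E, x ≤ e) ∧
    ∀ x < o, x ≠ 0 → sSup (E ∩ Set.Iio x) = x → x ∈ E

/-- `S` is stationary in the ordinal `o`. -/
def IsStationaryIn (S : Set Ordinal) (o : Ordinal) : Prop :=
  S ⊆ Set.Iio o ∧ ∀ E, IsClubIn E o → (S ∩ E).Nonempty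

/-- `s_A(α) = min (A \ (α+1))`, the least element of `A` above `α`. -/
noncomputable def succIn (A : Set Ordinal) (α : Ordinal) : Ordinal :=
  sInf {β | β ∈ A ∧ α < β}

/-- `set(E₁, ξ) = [ξ, s_{E₁}(ξ))`. -/
def blockSet (E₁ : Set Ordinal) (ξ : Ordinal) : Set Ordinal :=
  {ζ | ξ ≤ ζ ∧ ζ < succIn E₁ ξ}

/-- `set(E₂, E₁) = ⋃_{ξ ∈ E₂} set(E₁, ξ)`. -/
def setSet (E₂ E₁ : Set Ordinal) : Set Ordinal :=
  ⋃ ξ ∈ E₂, blockSet E₁ ξ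

/-- `A ⊆* B` mod `κ` : `|A \ B| < κ`. -/
def SubsetStar (κ : Cardinal.{0}) (A B : Set Ordinal) : Prop :=
  #(A \ B : Set Ordinal) < Cardinal.lift.{1} κ

/-- The weak power `λ^[κ]`. -/
noncomputable def weakPower (l k : Cardinal.{0}) : Cardinal.{1} :=
  sInf { c | ∃ P : Set (Set Ordinal),
    (∀ v ∈ P, v ⊆ Set.Iio l.ord ∧ #v ≤ Cardinal.lift.{1} k) ∧ #P = c ∧
    ∀ u : Set Ordinal, u ⊆ Set.Iio l.ord → #u = Cardinal.lift.{1} k →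
      ∃ P₀ ⊆ P, #P₀ < Cardinal.lift.{1} k ∧ u = ⋃₀ P₀ }

/-- Shelah's revised GCH, a theorem of ZFC. -/
def RevisedGCH : Prop :=
  ∀ θ lam : Cardinal.{0}, ℵ₀ < θ → θ.IsStrongLimit → θ ≤ lam →
    ∃ σ < θ, ∀ k, σ ≤ k → k < θ → weakPower lam k = Cardinal.lift.{1} lam

/-
If `F ⊆ [κ]^κ` is unreaped, the successor functions `s_A` (`A ∈ F`) form an unbounded family.
Otherwise some `g` bounds every `s_A` off a set of size `< κ`. Cut `κ` into consecutive intervals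
`[e ι, m ι)`, `[m ι, e (ι + 1))` such that each endpoint `x` is followed by an endpoint above `g x`
(a regular `κ` is closed under this recursion). For all but `< κ` many `ι` we have `s_A x ≤ g x`
at both `x = e ι` and `x = m ι`, so `A` meets both halves of block `ι`; hence the union of the
left halves reaps `F`.
-/

universe u

lemma injOn_of_mem_Ico {α β : Type*} [LinearOrder α] [SuccOrder α] [Preorder β]
    {e φ : α → β} {S : Set α} (he : Monotone e)
    (hφ : ∀ ι ∈ S, φ ι ∈ Ico (e ι) (e (Order.succ ι))) : InjOn φ S :=
  StrictMonoOn.injOn fun _ hι _ hι' hlt =>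
    ((hφ _ hι).2.trans_le (he (Order.succ_le_of_lt hlt))).trans_le (hφ _ hι').1

noncomputable def jumpSeq (h : Ordinal.{u} → Ordinal.{u}) (ι : Ordinal.{u}) : Ordinal.{u} :=
  ⨆ ξ : Iio ι, h (jumpSeq h ξ) + 1
termination_by ι
decreasing_by exact ξ.2

lemma apply_jumpSeq_lt (h : Ordinal.{u} → Ordinal.{u}) {ξ ι : Ordinal.{u}} (hξ : ξ < ι) :
    h (jumpSeq h ξ) < jumpSeq h ι := by
  rw [jumpSeq.eq_1 h ι]
  exact Ordinal.lt_iSup_add_one (fun ξ : Iio ι => h (jumpSeq h ξ)) ⟨ξ, hξ⟩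

lemma jumpSeq_strictMono {h : Ordinal.{u} → Ordinal.{u}} (hh : ∀ x, x < h x) :
    StrictMono (jumpSeq h) :=
  fun _ _ hξ => (hh _).trans (apply_jumpSeq_lt h hξ)

lemma jumpSeq_lt_ord {κ : Cardinal.{u}} (hreg : κ.IsRegular) {h : Ordinal.{u} → Ordinal.{u}}
    (hh : ∀ x < κ.ord, h x < κ.ord) {ι : Ordinal.{u}} (hι : ι < κ.ord) :
    jumpSeq h ι < κ.ord := by
  induction ι using WellFoundedLT.induction with
  | _ ι IH =>
    rw [jumpSeq]
    refine Ordinal.lift_iSup_add_one_lt_of_lt_cof ?_ fun ξ => hh _ (IH ξ ξ.2 (ξ.2.trans hι))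
    rw [Cardinal.mk_Iio_ordinal, ← Ordinal.lift_cof, hreg.cof_ord, Cardinal.lift_lift,
      Cardinal.lift_lt]
    exact Cardinal.lt_ord.1 hι

section Blocks

variable (g : Ordinal.{u} → Ordinal.{u})

noncomputable def escape (x : Ordinal.{u}) : Ordinal.{u} :=
  Order.succ (max x (g x))

lemma lt_escape_self (x : Ordinal.{u}) : x < escape g x :=
  Order.lt_succ_of_le (le_max_left _ _)

lemma apply_lt_escape (x : Ordinal.{u}) : g x < escape g x :=
  Order.lt_succ_of_le (le_max_right _ _)

noncomputable def blockStart : Ordinal.{u} → Ordinal.{u} :=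
  jumpSeq (escape g ∘ escape g)

noncomputable def blockMid (ι : Ordinal.{u}) : Ordinal.{u} :=
  escape g (blockStart g ι)

lemma blockStart_lt_blockMid (ι : Ordinal.{u}) : blockStart g ι < blockMid g ι :=
  lt_escape_self g _

lemma escape_blockMid_lt (ι : Ordinal.{u}) :
    escape g (blockMid g ι) < blockStart g (Order.succ ι) :=
  apply_jumpSeq_lt _ (Order.lt_succ ι)

lemma blockMid_lt_blockStart_succ (ι : Ordinal.{u}) :
    blockMid g ι < blockStart g (Order.succ ι) :=
  (lt_escape_self g _).trans (escape_blockMid_lt g ι)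

lemma blockStart_strictMono : StrictMono (blockStart g) :=
  jumpSeq_strictMono fun x => (lt_escape_self g x).trans (lt_escape_self g _)

lemma blockStart_succ_le (ι ι' : Ordinal.{u}) (h : ι < ι') :
    blockStart g (Order.succ ι) ≤ blockStart g ι' :=
  (blockStart_strictMono g).monotone (Order.succ_le_of_lt h)

lemma blockMid_strictMono : StrictMono (blockMid g) := fun ι ι' h =>
  ((blockMid_lt_blockStart_succ g ι).trans_le (blockStart_succ_le g ι ι' h)).trans
    (blockStart_lt_blockMid g ι')

lemma notMem_iUnion_Ico_blockMid {x ι : Ordinal.{u}}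
    (hx : x ∈ Ioo (blockMid g ι) (blockStart g (Order.succ ι))) :
    x ∉ ⋃ ι', Ico (blockStart g ι') (blockMid g ι') := by
  simp only [mem_iUnion, mem_Ico, not_exists, not_and, not_lt]
  intro ι' hι'
  rcases lt_trichotomy ι' ι with hlt | rfl | hgt
  · exact ((blockMid_lt_blockStart_succ g ι').trans_le (blockStart_succ_le g ι' ι hlt)).le.trans
      ((blockStart_lt_blockMid g ι).trans hx.1).le
  · exact hx.1.le
  · exact absurd (hx.2.trans_le (blockStart_succ_le g ι ι' hgt)) hι'.not_gt

end Blocks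

section Reaping

variable {κ : Cardinal.{0}}

lemma mk_Iio_ord (κ : Cardinal.{0}) : #(Iio κ.ord) = Cardinal.lift.{1} κ := by
  rw [Cardinal.mk_Iio_ordinal, Cardinal.card_ord]

lemma mk_Iio_ord_diff (hκ : ℵ₀ ≤ κ) {N : Set Ordinal} (hN : #N < Cardinal.lift.{1} κ) :
    #(Iio κ.ord \ N : Set Ordinal) = Cardinal.lift.{1} κ := by
  refine le_antisymm ((mk_le_mk_of_subset sdiff_subset).trans (mk_Iio_ord κ).le) ?_
  by_contra! hlt
  have hcover : Cardinal.lift.{1} κ ≤ #(Iio κ.ord \ N : Set Ordinal) + #N := calc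
    Cardinal.lift.{1} κ = #(Iio κ.ord) := (mk_Iio_ord κ).symm
    _ ≤ #(Iio κ.ord \ N ∪ N : Set Ordinal) := by
      rw [sdiff_union_self]; exact mk_le_mk_of_subset subset_union_left
    _ ≤ _ := mk_union_le _ _
  exact (add_lt_of_lt (aleph0_le_lift.2 hκ) hlt hN).not_ge hcover

lemma mk_eq_of_injOn_Iio_ord_diff (hκ : ℵ₀ ≤ κ) {X N : Set Ordinal} {φ : Ordinal → Ordinal}
    (hX : X ⊆ Iio κ.ord) (hN : #N < Cardinal.lift.{1} κ) (hφ : InjOn φ (Iio κ.ord \ N))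
    (hmaps : MapsTo φ (Iio κ.ord \ N) X) : #X = Cardinal.lift.{1} κ := by
  refine le_antisymm ((mk_le_mk_of_subset hX).trans (mk_Iio_ord κ).le) ?_
  calc Cardinal.lift.{1} κ = #(Iio κ.ord \ N : Set Ordinal) := (mk_Iio_ord_diff hκ hN).symm
    _ = #(φ '' (Iio κ.ord \ N)) := (mk_image_eq_of_injOn _ _ hφ).symm
    _ ≤ #X := mk_le_mk_of_subset hmaps.image_subset

lemma IsBig.exists_gt (hκ : ℵ₀ ≤ κ) {A : Set Ordinal} (hA : IsBig κ A) {o : Ordinal}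
    (ho : o < κ.ord) : ∃ β ∈ A, o < β := by
  by_contra! h
  have hsmall : #(Iio (Order.succ o)) < Cardinal.lift.{1} κ := by
    rw [Cardinal.mk_Iio_ordinal, lift_lt, ← Cardinal.lt_ord]
    exact (isSuccLimit_ord hκ).succ_lt ho
  refine (hA.2 ▸ hsmall).not_ge (mk_le_mk_of_subset fun β hβ => ?_)
  exact Order.lt_succ_iff.2 (h β hβ)

lemma IsBig.succIn_mem (hκ : ℵ₀ ≤ κ) {A : Set Ordinal} (hA : IsBig κ A) {o : Ordinal}
    (ho : o < κ.ord) : succIn A o ∈ A ∩ Ioi o :=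
  csInf_mem (hA.exists_gt hκ ho)

lemma IsBig.funOn_succIn (hκ : ℵ₀ ≤ κ) {A : Set Ordinal} (hA : IsBig κ A) :
    FunOn κ (succIn A) :=
  fun _ ho => hA.1 (hA.succIn_mem hκ ho).1

lemma unreapedFam_setOf_isBig (hκ : ℵ₀ ≤ κ) : UnreapedFam κ {A | IsBig κ A} := by
  refine ⟨fun _ hA => hA, ?_⟩
  rintro ⟨B, hBκ, hB⟩
  by_cases hBbig : #B = Cardinal.lift.{1} κ
  · have hempty := (hB B ⟨hBκ, hBbig⟩).2
    rw [inter_sdiff_self, mk_eq_zero] at hempty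
    exact (aleph0_pos.trans_le (aleph0_le_lift.2 hκ)).ne hempty
  · have hall := (hB (Iio κ.ord) ⟨subset_rfl, mk_Iio_ord κ⟩).1
    rw [inter_eq_self_of_subset_right hBκ] at hall
    exact hBbig hall

lemma IsBig.succIn_mem_Ioo_escape (hκ : ℵ₀ ≤ κ) {A : Set Ordinal} (hA : IsBig κ A)
    {g : Ordinal → Ordinal} {x : Ordinal} (hx : x < κ.ord) (hle : succIn A x ≤ g x) :
    succIn A x ∈ A ∩ Ioo x (escape g x) :=
  ⟨(hA.succIn_mem hκ hx).1, (hA.succIn_mem hκ hx).2, hle.trans_lt (apply_lt_escape g x)⟩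

lemma escape_lt_ord (hκ : ℵ₀ ≤ κ) {g : Ordinal → Ordinal} (hg : FunOn κ g) {x : Ordinal}
    (hx : x < κ.ord) : escape g x < κ.ord :=
  (isSuccLimit_ord hκ).succ_lt (max_lt hx (hg x hx))

lemma blockStart_lt_ord (hreg : κ.IsRegular) {g : Ordinal → Ordinal} (hg : FunOn κ g)
    {ι : Ordinal} (hι : ι < κ.ord) : blockStart g ι < κ.ord :=
  have hκ := hreg.aleph0_le
  jumpSeq_lt_ord hreg (fun _ hx => escape_lt_ord hκ hg (escape_lt_ord hκ hg hx)) hι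

lemma blockMid_lt_ord (hreg : κ.IsRegular) {g : Ordinal → Ordinal} (hg : FunOn κ g)
    {ι : Ordinal} (hι : ι < κ.ord) : blockMid g ι < κ.ord :=
  escape_lt_ord hreg.aleph0_le hg (blockStart_lt_ord hreg hg hι)

def leftHalves (κ : Cardinal.{0}) (g : Ordinal → Ordinal) : Set Ordinal :=
  Iio κ.ord ∩ ⋃ ι, Ico (blockStart g ι) (blockMid g ι)

lemma reaps_leftHalves (hreg : κ.IsRegular) {g : Ordinal → Ordinal} (hg : FunOn κ g)
    {F : Set (Set Ordinal)} (hF : ∀ A ∈ F, IsBig κ A)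
    (hbound : ∀ A ∈ F, LeStar κ (succIn A) g) : Reaps κ (leftHalves κ g) F := by
  have hκ := hreg.aleph0_le
  refine ⟨inter_subset_left, fun A hA => ?_⟩
  have hAκ := (hF A hA).1
  set bad : Set Ordinal := {α | α < κ.ord ∧ g α < succIn A α}
  set N : Set Ordinal := blockStart g ⁻¹' bad ∪ blockMid g ⁻¹' bad
  have hN : #N < Cardinal.lift.{1} κ :=
    (mk_union_le _ _).trans_lt <| add_lt_of_lt (aleph0_le_lift.2 hκ)
      ((mk_preimage_of_injective _ _ (blockStart_strictMono g).injective).trans_lt (hbound A hA))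
      ((mk_preimage_of_injective _ _ (blockMid_strictMono g).injective).trans_lt (hbound A hA))
  have hgood : ∀ x < κ.ord, x ∉ bad → succIn A x ∈ A ∩ Ioo x (escape g x) :=
    fun x hx hxbad => (hF A hA).succIn_mem_Ioo_escape hκ hx (not_lt.1 fun h => hxbad ⟨hx, h⟩)
  have hleft : ∀ ι ∈ Iio κ.ord \ N,
      succIn A (blockStart g ι) ∈ A ∩ Ioo (blockStart g ι) (blockMid g ι) :=
    fun ι hι => hgood _ (blockStart_lt_ord hreg hg hι.1) fun h => hι.2 (Or.inl h)
  have hright : ∀ ι ∈ Iio κ.ord \ N,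
      succIn A (blockMid g ι) ∈ A ∩ Ioo (blockMid g ι) (blockStart g (Order.succ ι)) := by
    intro ι hι
    obtain ⟨hmem, hlo, hhi⟩ := hgood _ (blockMid_lt_ord hreg hg hι.1) fun h => hι.2 (Or.inr h)
    exact ⟨hmem, hlo, hhi.trans (escape_blockMid_lt g ι)⟩
  constructor
  · refine mk_eq_of_injOn_Iio_ord_diff (φ := succIn A ∘ blockStart g) hκ (fun x hx => hAκ hx.1)
      hN (injOn_of_mem_Ico (blockStart_strictMono g).monotone fun ι hι => ?_) fun ι hι => ?_
    · obtain ⟨-, hlo, hhi⟩ := hleft ι hι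
      exact ⟨hlo.le, hhi.trans (blockMid_lt_blockStart_succ g ι)⟩
    · obtain ⟨hmem, hlo, hhi⟩ := hleft ι hι
      exact ⟨hmem, hAκ hmem, mem_iUnion.2 ⟨ι, hlo.le, hhi⟩⟩
  · refine mk_eq_of_injOn_Iio_ord_diff (φ := succIn A ∘ blockMid g) hκ (fun x hx => hAκ hx.1)
      hN (injOn_of_mem_Ico (blockStart_strictMono g).monotone fun ι hι => ?_) fun ι hι => ?_
    · obtain ⟨-, hlo, hhi⟩ := hright ι hι
      exact ⟨((blockStart_lt_blockMid g ι).trans hlo).le, hhi⟩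
    · obtain ⟨hmem, hlo, hhi⟩ := hright ι hι
      exact ⟨hmem, hAκ hmem, fun hB => notMem_iUnion_Ico_blockMid g ⟨hlo, hhi⟩ hB.2⟩

lemma unboundedFam_image_succIn (hreg : κ.IsRegular) {F : Set (Set Ordinal)}
    (hF : UnreapedFam κ F) : UnboundedFam κ (succIn '' F) := by
  refine ⟨forall_mem_image.2 fun A hA => (hF.1 A hA).funOn_succIn hreg.aleph0_le, ?_⟩
  rintro ⟨g, hg, hbound⟩
  exact hF.2 ⟨leftHalves κ g,
    reaps_leftHalves hreg hg hF.1 fun A hA => hbound _ (mem_image_of_mem _ hA)⟩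

end Reaping

theorem stmt1_general (κ : Cardinal.{0}) (hreg : κ.IsRegular) :
    boundingNum κ ≤ reapingNum κ := by
  refine le_csInf ⟨_, _, unreapedFam_setOf_isBig hreg.aleph0_le, rfl⟩ ?_
  rintro _ ⟨F, hF, rfl⟩
  calc boundingNum κ ≤ #(succIn '' F) := csInf_le' ⟨_, unboundedFam_image_succIn hreg hF, rfl⟩
    _ ≤ #F := mk_image_le

/-- For every regular uncountable `κ`, `𝔟(κ) ≤ 𝔯(κ)`. -/
theorem stmt1 (κ : Cardinal.{0}) (hreg : κ.IsRegular) (hunc : ℵ₀ < κ) :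
    boundingNum κ ≤ reapingNum κ :=
  stmt1_general κ hreg
end

section
/- Let κ be a regular uncountable cardinal, and let ⟨A_γ : γ < δ⟩ (for some δ with κ ≤ δ < κ⁺) be a sequence of pairwise almost disjoint sets in [κ]^κ. Let e : κ → δ be a bijection and let E = {μ_ξ : ξ < κ} ⊆ κ be a club, enumerated increasingly. Define B_ξ = {α : μ_ξ ≤ α < μ_{ξ+1} and α ∉ A_{e(ν)} for all ν < μ_ξ}, and A = ⋃_{ξ<κ} B_ξ. Then for every γ < δ, |A_γ ∩ A| < κ. -/
/-!
Write `γ = e ν` and pick `ξ₀` with `ν < μ ξ₀`, using that `E` is unbounded. Every block `B ξ` with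
`ξ₀ ≤ ξ` avoids `A γ` by construction, because `ν < μ ξ₀ ≤ μ ξ`, while every block with `ξ < ξ₀`
lies below `μ (ξ + 1) ≤ μ ξ₀`. Hence `A γ ∩ ⋃ ξ, B ξ ⊆ μ ξ₀`, an initial segment of `κ` of size `< κ`.
-/

open Cardinal Set

theorem Cardinal.mk_Iio_lt_lift_of_lt_ord {κ : Cardinal.{0}} {β : Ordinal.{0}} (h : β < κ.ord) :
    #(Iio β) < lift.{1} κ := by
  rw [mk_Iio_ordinal, lift_lt]
  exact lt_ord.mp h

theorem inter_biUnion_subset_Iio {o ξ₀ : Ordinal} {μ : Ordinal → Ordinal}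
    {B : Ordinal → Set Ordinal} {C : Set Ordinal} (hμ : MonotoneOn μ (Iio o)) (hξ₀ : ξ₀ < o)
    (hB : ∀ ξ < o, B ξ ⊆ Iio (μ (ξ + 1))) (hC : ∀ ξ < o, ξ₀ ≤ ξ → Disjoint C (B ξ)) :
    C ∩ ⋃ ξ ∈ Iio o, B ξ ⊆ Iio (μ ξ₀) := by
  rintro α ⟨hαC, hα⟩
  obtain ⟨ξ, hξ, hαB⟩ := mem_iUnion₂.mp hα
  rcases lt_or_ge ξ ξ₀ with hlt | hle
  · have hsucc : ξ + 1 ≤ ξ₀ := Order.add_one_le_of_lt hlt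
    exact (hB ξ hξ hαB).trans_le (hμ (hsucc.trans_lt hξ₀) hξ₀ hsucc)
  · exact absurd hαB ((hC ξ hξ hle).notMem_of_mem_left hαC)

theorem stmt5_general (κ : Cardinal.{0}) (hunc : ℵ₀ < κ) (δ : Ordinal) (A : Ordinal → Set Ordinal)
    (e : Ordinal → Ordinal) (he : Set.BijOn e (Set.Iio κ.ord) (Set.Iio δ))
    (μ : Ordinal → Ordinal) (E : Set Ordinal) (hE : IsClubIn E κ.ord)
    (hμmono : StrictMonoOn μ (Set.Iio κ.ord)) (hμrange : μ '' Set.Iio κ.ord = E)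
    (B : Ordinal → Set Ordinal)
    (hB : ∀ ξ < κ.ord, B ξ = {α | μ ξ ≤ α ∧ α < μ (ξ + 1) ∧ ∀ ν < μ ξ, α ∉ A (e ν)}) :
    ∀ γ < δ, #((A γ ∩ ⋃ ξ ∈ Set.Iio κ.ord, B ξ) : Set Ordinal) < Cardinal.lift.{1} κ := by
  intro γ hγ
  obtain ⟨ν, hν, rfl⟩ := he.surjOn hγ
  obtain ⟨_, hmE, hνm⟩ := hE.2.1 (ν + 1) ((isSuccLimit_ord hunc.le).add_one_lt hν)
  obtain ⟨ξ₀, hξ₀, rfl⟩ : _ ∈ μ '' Iio κ.ord := hμrange ▸ hmE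
  refine (mk_le_mk_of_subset (inter_biUnion_subset_Iio hμmono.monotoneOn hξ₀ ?_ ?_)).trans_lt
    (mk_Iio_lt_lift_of_lt_ord (hE.1 hmE))
  · intro ξ hξ α hα
    rw [hB ξ hξ] at hα
    exact hα.2.1
  · intro ξ hξ hle
    rw [hB ξ hξ]
    have hνξ : ν < μ ξ := (lt_add_one ν).trans_le
      (hνm.trans (hμmono.monotoneOn hξ₀ hξ hle))
    exact disjoint_left.mpr fun α hα hαB => hαB.2.2 ν hνξ hα

/-- Given a pairwise a.d. sequence `⟨A_γ : γ < δ⟩` (`κ ≤ δ < κ⁺`) in `[κ]^κ`,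
a bijection `e : κ → δ`, a club `E` enumerated increasingly by `μ`, and the sets
`B_ξ = {α : μ_ξ ≤ α < μ_{ξ+1}, ∀ ν < μ_ξ, α ∉ A_{e(ν)}}`, the set `A = ⋃_{ξ<κ} B_ξ`
satisfies `|A_γ ∩ A| < κ` for all `γ < δ`. -/
theorem stmt5 (κ : Cardinal.{0}) (hreg : κ.IsRegular) (hunc : ℵ₀ < κ)
    (δ : Ordinal) (hδ1 : κ.ord ≤ δ) (hδ2 : δ < (Order.succ κ).ord)
    (A : Ordinal → Set Ordinal) (hbig : ∀ γ < δ, IsBig κ (A γ))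
    (had : ∀ γ < δ, ∀ γ' < δ, γ ≠ γ' → AlmostDisjoint κ (A γ) (A γ'))
    (e : Ordinal → Ordinal) (he : Set.BijOn e (Set.Iio κ.ord) (Set.Iio δ))
    (μ : Ordinal → Ordinal) (E : Set Ordinal) (hE : IsClubIn E κ.ord)
    (hμmono : StrictMonoOn μ (Set.Iio κ.ord)) (hμrange : μ '' Set.Iio κ.ord = E)
    (B : Ordinal → Set Ordinal)
    (hB : ∀ ξ < κ.ord, B ξ = {α | μ ξ ≤ α ∧ α < μ (ξ + 1) ∧ ∀ ν < μ ξ, α ∉ A (e ν)}) :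
    ∀ γ < δ, #((A γ ∩ ⋃ ξ ∈ Set.Iio κ.ord, B ξ) : Set Ordinal) < Cardinal.lift.{1} κ :=
  stmt5_general κ hunc δ A e he μ E hE hμmono hμrange B hB
end

section
/- Let κ be a regular uncountable cardinal. Suppose F ⊆ [κ]^κ is an unreaped family with |F| = r(κ), and suppose there is a club E₁ ⊆ κ such that for every club E ⊆ E₁ there exists A ∈ F with A ⊆* set(E, E₁). Then d(κ) ≤ r(κ). -/
open Cardinal Set

/-!
For `A ∈ F` put `f_A(α) = s_A(s_{E₁}(α))`. Given `g ∈ κ^κ`, the points of `E₁` closed under `g`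
form a club `E ⊆ E₁`, so some `A ∈ F` satisfies `A ⊆* set(E, E₁)`. For all large `α`, the point
`f_A(α) ∈ A` then lies in a block `[ξ, s_{E₁}(ξ))` with `ξ ∈ E`; as `f_A(α) ≥ s_{E₁}(α)`, we get
`α < ξ`, hence `g(α) < ξ ≤ f_A(α)`. So `{f_A : A ∈ F}` is dominating and `𝔡(κ) ≤ |F| = 𝔯(κ)`.
-/

def IsUnboundedIn (A : Set Ordinal) (o : Ordinal) : Prop :=
  ∀ x < o, ∃ a ∈ A, x < a

section Regular

variable {κ : Cardinal.{0}}

theorem mk_lt_of_subset_Iio {S : Set Ordinal} {β : Ordinal} (hS : S ⊆ Iio β) (hβ : β < κ.ord) :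
    #S < Cardinal.lift.{1} κ :=
  calc #S ≤ #(Iio β) := mk_le_mk_of_subset hS
    _ = Cardinal.lift.{1} β.card := mk_Iio_ordinal β
    _ < Cardinal.lift.{1} κ := lift_lt.2 (lt_ord.1 hβ)

theorem sSup_lt_ord_of_mk_lt (hreg : κ.IsRegular) {S : Set Ordinal} (hS : S ⊆ Iio κ.ord)
    (hc : #S < Cardinal.lift.{1} κ) : sSup S < κ.ord := by
  refine Ordinal.sSup_lt_of_lt_cof ?_ hS
  rwa [← Ordinal.lift_cof, hreg.cof_ord]

theorem IsBig.isUnboundedIn (hreg : κ.IsRegular) {A : Set Ordinal} (hA : IsBig κ A) :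
    IsUnboundedIn A κ.ord := by
  intro x hx
  by_contra! hbdd
  have hx1 : x + 1 < κ.ord := (isSuccLimit_ord hreg.aleph0_le).add_one_lt hx
  have := mk_lt_of_subset_Iio (fun a ha => Order.lt_add_one_iff.2 (hbdd a ha)) hx1
  exact this.ne hA.2

end Regular

section SuccIn

variable {A : Set Ordinal} {o α : Ordinal}

theorem succIn_mem_and_lt (hA : IsUnboundedIn A o) (hα : α < o) :
    succIn A α ∈ A ∧ α < succIn A α :=
  csInf_mem (hA α hα)

theorem succIn_mem (hA : IsUnboundedIn A o) (hα : α < o) : succIn A α ∈ A :=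
  (succIn_mem_and_lt hA hα).1

theorem lt_succIn (hA : IsUnboundedIn A o) (hα : α < o) : α < succIn A α :=
  (succIn_mem_and_lt hA hα).2

theorem succIn_le {β : Ordinal} (hβ : β ∈ A) (hαβ : α < β) : succIn A α ≤ β :=
  csInf_le' ⟨hβ, hαβ⟩

end SuccIn

theorem IsClubIn.isUnboundedIn {E : Set Ordinal} {o : Ordinal} (hE : IsClubIn E o)
    (ho : Order.IsSuccLimit o) : IsUnboundedIn E o := by
  intro x hx
  obtain ⟨e, he, hxe⟩ := hE.2.1 (x + 1) (ho.add_one_lt hx)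
  exact ⟨e, he, Order.add_one_le_iff.1 hxe⟩

theorem IsClubIn.mem_of_forall_exists_between {E : Set Ordinal} {o ξ : Ordinal}
    (hE : IsClubIn E o) (hξ : ξ < o) (hξ0 : ξ ≠ 0) (h : ∀ δ < ξ, ∃ e ∈ E, δ < e ∧ e < ξ) :
    ξ ∈ E := by
  refine hE.2.2 ξ hξ hξ0 (le_antisymm (csSup_le' fun e he => he.2.le) ?_)
  refine le_of_forall_lt fun δ hδ => ?_
  obtain ⟨e, he, hδe, heξ⟩ := h δ hδ
  exact lt_csSup_of_lt ⟨ξ, fun e he => he.2.le⟩ ⟨he, heξ⟩ hδe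

theorem exists_closed_under_gt {κ : Cardinal.{0}} (hreg : κ.IsRegular) (hunc : ℵ₀ < κ)
    {g : Ordinal → Ordinal} (hg : FunOn κ g) {x : Ordinal} (hx : x < κ.ord) :
    ∃ ξ < κ.ord, x < ξ ∧ ∀ δ < ξ, g δ < ξ := by
  set H : Ordinal → Ordinal := fun y => sSup ((fun δ => g δ + 1) '' Iio y)
  have hH : ∀ y < κ.ord, H y < κ.ord := by
    intro y hy
    refine sSup_lt_ord_of_mk_lt hreg ?_ (mk_image_le.trans_lt (mk_lt_of_subset_Iio subset_rfl hy))
    rintro _ ⟨δ, hδ, rfl⟩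
    exact (isSuccLimit_ord hreg.aleph0_le).add_one_lt (hg δ (lt_trans hδ hy))
  have hgH : ∀ δ y, δ < y → g δ < H y := fun δ y hδ =>
    Order.add_one_le_iff.1 (le_csSup Ordinal.bddAbove_of_small ⟨δ, hδ, rfl⟩)
  have hx1 : x + 1 < κ.ord := (isSuccLimit_ord hreg.aleph0_le).add_one_lt hx
  refine ⟨Ordinal.nfp H (x + 1), nfp_lt_ord_of_isRegular hreg hunc.ne' hH hx1,
    (lt_add_one x).trans_le (Ordinal.le_nfp H _), fun δ hδ => ?_⟩
  obtain ⟨n, hn⟩ := Ordinal.lt_nfp_iff.1 hδ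
  calc g δ < H (H^[n] (x + 1)) := hgH δ _ hn
    _ = H^[n + 1] (x + 1) := (Function.iterate_succ_apply' H n _).symm
    _ ≤ Ordinal.nfp H (x + 1) := Ordinal.iterate_le_nfp H _ _

def closurePoints (κ : Cardinal.{0}) (E₁ : Set Ordinal) (g : Ordinal → Ordinal) : Set Ordinal :=
  {ξ | ξ < κ.ord ∧ ξ ∈ E₁ ∧ ∀ δ < ξ, g δ < ξ}

section ClosurePoints

variable {κ : Cardinal.{0}} {E₁ : Set Ordinal} {g : Ordinal → Ordinal}

theorem closurePoints_subset : closurePoints κ E₁ g ⊆ E₁ := fun _ hξ => hξ.2.1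

theorem mem_closurePoints_of_forall_lt (hE₁ : IsClubIn E₁ κ.ord) (hE₁u : IsUnboundedIn E₁ κ.ord)
    {ξ : Ordinal} (hξ : ξ < κ.ord) (hξ0 : ξ ≠ 0)
    (h : ∀ δ < ξ, g δ < ξ ∧ succIn E₁ δ < ξ) : ξ ∈ closurePoints κ E₁ g :=
  ⟨hξ, hE₁.mem_of_forall_exists_between hξ hξ0 fun δ hδ =>
      ⟨succIn E₁ δ, succIn_mem hE₁u (hδ.trans hξ), lt_succIn hE₁u (hδ.trans hξ), (h δ hδ).2⟩,
    fun δ hδ => (h δ hδ).1⟩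

theorem isClubIn_closurePoints (hreg : κ.IsRegular) (hunc : ℵ₀ < κ) (hE₁ : IsClubIn E₁ κ.ord)
    (hg : FunOn κ g) : IsClubIn (closurePoints κ E₁ g) κ.ord := by
  have hE₁u := hE₁.isUnboundedIn (isSuccLimit_ord hreg.aleph0_le)
  refine ⟨fun ξ hξ => hξ.1, fun x hx => ?_, fun x hx hx0 hsup => ?_⟩
  · -- a closure point of `max g (succIn E₁)` is a limit of `E₁`
    have hg' : FunOn κ fun δ => max (g δ) (succIn E₁ δ) := fun δ hδ =>
      max_lt (hg δ hδ) (hE₁.1 (succIn_mem hE₁u hδ))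
    obtain ⟨ξ, hξ, hxξ, hclosed⟩ := exists_closed_under_gt hreg hunc hg' hx
    refine ⟨ξ, mem_closurePoints_of_forall_lt hE₁ hE₁u hξ (ne_bot_of_gt hxξ) fun δ hδ => ?_, hxξ.le⟩
    exact max_lt_iff.1 (hclosed δ hδ)
  · refine mem_closurePoints_of_forall_lt hE₁ hE₁u hx hx0 fun δ hδ => ?_
    obtain ⟨ξ, ⟨hξC, hξx⟩, hδξ⟩ := exists_lt_of_lt_csSup' (hsup.symm ▸ hδ)
    exact ⟨(hξC.2.2 δ hδξ).trans hξx, (succIn_le hξC.2.1 hδξ).trans_lt hξx⟩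

end ClosurePoints

noncomputable def succInSuccIn (A E₁ : Set Ordinal) (α : Ordinal) : Ordinal :=
  succIn A (succIn E₁ α)

section SuccInSuccIn

variable {κ : Cardinal.{0}} {A E₁ : Set Ordinal}

theorem funOn_succInSuccIn (hreg : κ.IsRegular) (hA : IsBig κ A) (hE₁ : IsClubIn E₁ κ.ord) :
    FunOn κ (succInSuccIn A E₁) := fun _ hα =>
  have hE₁u := hE₁.isUnboundedIn (isSuccLimit_ord hreg.aleph0_le)
  hA.1 (succIn_mem (hA.isUnboundedIn hreg) (hE₁.1 (succIn_mem hE₁u hα)))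

theorem lt_of_mem_setSet_closurePoints {g : Ordinal → Ordinal} (hE₁u : IsUnboundedIn E₁ κ.ord)
    {α a : Ordinal} (hα : α < κ.ord) (ha : a ∈ setSet (closurePoints κ E₁ g) E₁)
    (hαa : succIn E₁ α ≤ a) : g α < a := by
  simp only [setSet, blockSet, mem_iUnion] at ha
  obtain ⟨ξ, hξ, hξa, haξ⟩ := ha
  have hαξ : α < ξ := by
    by_contra! hξα
    have : succIn E₁ ξ ≤ succIn E₁ α :=
      succIn_le (succIn_mem hE₁u hα) (hξα.trans_lt (lt_succIn hE₁u hα))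
    exact (haξ.trans_le this).not_ge hαa
  exact (hξ.2.2 α hαξ).trans_le hξa

theorem leStar_succInSuccIn (hreg : κ.IsRegular) (hA : IsBig κ A) (hE₁ : IsClubIn E₁ κ.ord)
    {g : Ordinal → Ordinal} (hsub : SubsetStar κ A (setSet (closurePoints κ E₁ g) E₁)) :
    LeStar κ g (succInSuccIn A E₁) := by
  have hE₁u := hE₁.isUnboundedIn (isSuccLimit_ord hreg.aleph0_le)
  have hAu := hA.isUnboundedIn hreg
  set β := sSup (A \ setSet (closurePoints κ E₁ g) E₁)
  have hβ : β < κ.ord := sSup_lt_ord_of_mk_lt hreg (sdiff_subset.trans hA.1) hsub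
  refine mk_lt_of_subset_Iio (fun α ⟨hα, hlt⟩ => mem_Iio.2 <| lt_of_not_ge fun hβα => ?_) hβ
  have hE : succIn E₁ α < κ.ord := hE₁.1 (succIn_mem hE₁u hα)
  have hαa : succIn E₁ α < succInSuccIn A E₁ α := lt_succIn hAu hE
  -- past `β`, the point `f_A(α) ∈ A` can only lie in `set(E, E₁)`
  have hmem : succInSuccIn A E₁ α ∈ setSet (closurePoints κ E₁ g) E₁ := by
    by_contra hnot
    have : succInSuccIn A E₁ α ≤ β :=
      le_csSup ⟨κ.ord, fun a ha => (hA.1 ha.1).le⟩ ⟨succIn_mem hAu hE, hnot⟩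
    exact this.not_gt (hβα.trans_lt ((lt_succIn hE₁u hα).trans hαa))
  exact hlt.not_gt (lt_of_mem_setSet_closurePoints hE₁u hα hmem hαa.le)

end SuccInSuccIn

/-- If `F ⊆ [κ]^κ` is unreaped of size `𝔯(κ)` and there is a club `E₁`
such that every club `E ⊆ E₁` admits `A ∈ F` with `A ⊆* set(E, E₁)`, then `𝔡(κ) ≤ 𝔯(κ)`. -/
theorem stmt8 (κ : Cardinal.{0}) (hreg : κ.IsRegular) (hunc : ℵ₀ < κ)
    (F : Set (Set Ordinal)) (hF : UnreapedFam κ F) (hFcard : #F = reapingNum κ)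
    (E₁ : Set Ordinal) (hE₁ : IsClubIn E₁ κ.ord)
    (h : ∀ E, IsClubIn E κ.ord → E ⊆ E₁ → ∃ A ∈ F, SubsetStar κ A (setSet E E₁)) :
    dominatingNum κ ≤ reapingNum κ := by
  have hdom : DominatingFam κ ((succInSuccIn · E₁) '' F) := by
    refine ⟨?_, fun g hg => ?_⟩
    · rintro _ ⟨A, hA, rfl⟩
      exact funOn_succInSuccIn hreg (hF.1 A hA) hE₁
    · obtain ⟨A, hA, hsub⟩ :=
        h _ (isClubIn_closurePoints hreg hunc hE₁ hg) closurePoints_subset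
      exact ⟨_, mem_image_of_mem _ hA, leStar_succInSuccIn hreg (hF.1 A hA) hE₁ hsub⟩
  calc dominatingNum κ ≤ #((succInSuccIn · E₁) '' F) := csInf_le' ⟨_, hdom, rfl⟩
    _ ≤ #F := mk_image_le
    _ = reapingNum κ := hFcard
end

section
/- Let μ ≥ ℶ_ω be any cardinal. Then there exists an uncountable regular cardinal θ < ℶ_ω and a family 𝒫 ⊆ [μ]^{≤θ} with |𝒫| ≤ μ such that for every u ∈ [μ]^θ there exists v ∈ 𝒫 with v ⊆ u and |v| ≥ ℵ₀. -/
open Cardinal Set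

/-
For `θ` regular with `σ ≤ θ < ℶ_ω` the Revised GCH makes `μ^[θ] = μ`, so some family `𝒫` of
size `μ` writes every `u ∈ [μ]^θ` as a union of fewer than `θ` of its members. Since `θ` is
uncountable, a union of fewer than `θ` finite sets has size `< θ`, so one of these members of
`𝒫` is an infinite subset of `u`.
-/

theorem exists_aleph0_le_mk_of_lt_mk_sUnion {α : Type*} {κ : Cardinal} (hκ : ℵ₀ < κ)
    {P : Set (Set α)} (hP : #P < κ) (hU : κ ≤ #(⋃₀ P)) : ∃ v ∈ P, ℵ₀ ≤ #v := by
  by_contra! hfin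
  have : #(⋃₀ P) < κ :=
    calc #(⋃₀ P) ≤ #P * ⨆ v : P, #(v : Set α) := mk_sUnion_le P
      _ ≤ #P * ℵ₀ := by gcongr; exact ciSup_le' fun v ↦ (hfin v v.2).le
      _ < κ := mul_lt_of_lt hκ.le hP hκ
  exact this.not_ge hU

theorem exists_isRegular_between_of_isSuccLimit {c σ : Cardinal} (hc : Order.IsSuccLimit c)
    (hc₀ : ℵ₀ < c) (hσ : σ < c) : ∃ θ, θ.IsRegular ∧ ℵ₀ < θ ∧ σ ≤ θ ∧ θ < c :=
  ⟨Order.succ (σ ⊔ ℵ₀), isRegular_succ le_sup_right,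
    le_sup_right.trans_lt (Order.lt_succ _), le_sup_left.trans (Order.le_succ _),
    hc.succ_lt (max_lt hσ hc₀)⟩

theorem aleph0_lt_beth_omega0 : ℵ₀ < ℶ_ Ordinal.omega0 := by
  simpa using beth_strictMono Ordinal.omega0_pos

/-- The families `𝒫` over which `weakPower l k` is the least cardinality. -/
def IsWeakPowerBasis (l k : Cardinal.{0}) (P : Set (Set Ordinal)) : Prop :=
  (∀ v ∈ P, v ⊆ Set.Iio l.ord ∧ #v ≤ Cardinal.lift.{1} k) ∧
    ∀ u : Set Ordinal, u ⊆ Set.Iio l.ord → #u = Cardinal.lift.{1} k →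
      ∃ P₀ ⊆ P, #P₀ < Cardinal.lift.{1} k ∧ u = ⋃₀ P₀

theorem isWeakPowerBasis_setOf_mk_le {l k : Cardinal.{0}} (hk : 1 < k) :
    IsWeakPowerBasis l k {v | v ⊆ Set.Iio l.ord ∧ #v ≤ Cardinal.lift.{1} k} := by
  refine ⟨fun _ hv ↦ hv, fun u hu hcard ↦ ⟨{u}, ?_, ?_, (sUnion_singleton u).symm⟩⟩
  · simpa using ⟨hu, hcard.le⟩
  · simpa using hk

theorem exists_isWeakPowerBasis_mk_eq_weakPower {l k : Cardinal.{0}} (hk : 1 < k) :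
    ∃ P, IsWeakPowerBasis l k P ∧ #P = weakPower l k := by
  obtain ⟨P, hsub, hcard, hcover⟩ : weakPower l k ∈ _ :=
    csInf_mem ⟨_, _, (isWeakPowerBasis_setOf_mk_le hk).1, rfl, (isWeakPowerBasis_setOf_mk_le hk).2⟩
  exact ⟨P, ⟨hsub, hcover⟩, hcard⟩

/-- (From the Revised GCH) For every `μ ≥ ℶ_ω` there exist an uncountable
regular `θ < ℶ_ω` and `𝒫 ⊆ [μ]^{≤θ}` with `|𝒫| ≤ μ` such that every `u ∈ [μ]^θ` has an
infinite subset `v ∈ 𝒫`. -/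
theorem stmt9 (hRGCH : RevisedGCH) (μ : Cardinal.{0})
    (hμ : Cardinal.beth Ordinal.omega0 ≤ μ) :
    ∃ θ : Cardinal.{0}, θ.IsRegular ∧ ℵ₀ < θ ∧ θ < Cardinal.beth Ordinal.omega0 ∧
      ∃ P : Set (Set Ordinal),
        (∀ v ∈ P, v ⊆ Set.Iio μ.ord ∧ #v ≤ Cardinal.lift.{1} θ) ∧
        #P ≤ Cardinal.lift.{1} μ ∧
        ∀ u : Set Ordinal, u ⊆ Set.Iio μ.ord → #u = Cardinal.lift.{1} θ →
          ∃ v ∈ P, v ⊆ u ∧ (ℵ₀ : Cardinal.{1}) ≤ #v := by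
  have hSL : (ℶ_ Ordinal.omega0).IsStrongLimit :=
    isStrongLimit_beth.mpr Ordinal.isSuccLimit_omega0.isSuccPrelimit
  obtain ⟨σ, hσ, hwp⟩ := hRGCH _ μ aleph0_lt_beth_omega0 hSL hμ
  obtain ⟨θ, hreg, hθ₀, hσθ, hθ⟩ :=
    exists_isRegular_between_of_isSuccLimit hSL.isSuccLimit aleph0_lt_beth_omega0 hσ
  obtain ⟨P, ⟨hsub, hcover⟩, hcard⟩ :=
    exists_isWeakPowerBasis_mk_eq_weakPower (l := μ) (one_lt_aleph0.trans hθ₀)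
  refine ⟨θ, hreg, hθ₀, hθ, P, hsub, (hcard.trans (hwp θ hσθ hθ)).le, fun u hu hu_card ↦ ?_⟩
  obtain ⟨P₀, hP₀, hP₀_card, rfl⟩ := hcover u hu hu_card
  obtain ⟨v, hv, hv_inf⟩ := exists_aleph0_le_mk_of_lt_mk_sUnion
    (by simpa using hθ₀) hP₀_card hu_card.ge
  exact ⟨v, hP₀ hv, subset_sUnion_of_mem hv, hv_inf⟩
end
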